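/- Let ρ be a density operator in the spin-s representation such that the covariance matrix Λ(ρ) is diagonal, with diagonal entries μ₁, μ₂, μ₃. Then μ₁μ₂μ₃ ≥ (1/4)(λ₁²μ₁ + λ₂²μ₂ + λ₃²μ₃), where λ_k = tr(ρL_k). -/

import Mathlib

open Matrix Complex
open scoped ComplexOrder

noncomputable section

/-- spin value s = j/2 -/
def sVal (j : ℕ) : ℝ := (j : ℝ) / 2

/-- m-value of the k-th basis vector: m = k - s -/
def mVal (j : ℕ) (k : Fin (j + 1)) : ℝ := (k : ℝ) - sVal j

/-- L₃ -/
def L3 (j : ℕ) : Matrix (Fin (j + 1)) (Fin (j + 1)) ℂ :=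
  Matrix.diagonal (fun k => (mVal j k : ℂ))

/-- raising operator L₊ -/
def Lp (j : ℕ) : Matrix (Fin (j + 1)) (Fin (j + 1)) ℂ :=
  Matrix.of fun i k =>
    if (i : ℕ) = (k : ℕ) + 1 then
      ((Real.sqrt (sVal j * (sVal j + 1) - mVal j k * (mVal j k + 1)) : ℝ) : ℂ)
    else 0

/-- lowering operator L₋ -/
def Lm (j : ℕ) : Matrix (Fin (j + 1)) (Fin (j + 1)) ℂ :=
  Matrix.of fun i k =>
    if (i : ℕ) + 1 = (k : ℕ) then
      ((Real.sqrt (sVal j * (sVal j + 1) - mVal j k * (mVal j k - 1)) : ℝ) : ℂ)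
    else 0

/-- L₁ = (L₊ + L₋)/2 -/
def L1 (j : ℕ) : Matrix (Fin (j + 1)) (Fin (j + 1)) ℂ := (1 / 2 : ℂ) • (Lp j + Lm j)

/-- L₂ = (L₊ − L₋)/(2i) -/
def L2 (j : ℕ) : Matrix (Fin (j + 1)) (Fin (j + 1)) ℂ :=
  (1 / (2 * Complex.I)) • (Lp j - Lm j)

/-- density operator -/
def IsDensity {j : ℕ} (ρ : Matrix (Fin (j + 1)) (Fin (j + 1)) ℂ) : Prop :=
  ρ.PosSemidef ∧ ρ.trace = 1

/-- expectation value -/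
def expVal {j : ℕ} (ρ A : Matrix (Fin (j + 1)) (Fin (j + 1)) ℂ) : ℝ :=
  ((ρ * A).trace).re

/-- variance -/
def Var {j : ℕ} (ρ A : Matrix (Fin (j + 1)) (Fin (j + 1)) ℂ) : ℝ :=
  ((ρ * A ^ 2).trace).re - (((ρ * A).trace).re) ^ 2

/-- angular momentum component along a direction e ∈ ℝ³ -/
def dirL (j : ℕ) (e : Fin 3 → ℝ) : Matrix (Fin (j + 1)) (Fin (j + 1)) ℂ :=
  (e 0 : ℂ) • L1 j + (e 1 : ℂ) • L2 j + (e 2 : ℂ) • L3 j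

/-- the three angular momentum components as a function `Fin 3 → Matrix` -/
def Lcomp (j : ℕ) : Fin 3 → Matrix (Fin (j + 1)) (Fin (j + 1)) ℂ := ![L1 j, L2 j, L3 j]

/-- the covariance matrix Λ(ρ) -/
def covMat {j : ℕ} (ρ : Matrix (Fin (j + 1)) (Fin (j + 1)) ℂ) : Matrix (Fin 3) (Fin 3) ℝ :=
  Matrix.of fun a b =>
    ((ρ * (Lcomp j a * Lcomp j b)).trace).re - expVal ρ (Lcomp j a) * expVal ρ (Lcomp j b)


/-!
For Hermitian observables `A_a` with means `λ_a = tr(ρ A_a)`, the matrix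
`Q_ab = tr(ρ (A_a - λ_a)(A_b - λ_b))` is the Gram matrix of the `A_a - λ_a` for the semi-inner
product `(X, Y) ↦ tr(ρ Xᴴ Y)`, hence positive semidefinite. Its real part is `Λ(ρ)` and its
imaginary part is `tr(ρ ⁅A_a, A_b⁆) / 2i`, which for the angular momentum components is
`ε_abc λ_c / 2` by `⁅L_a, L_b⁆ = i ε_abc L_c`. When `Λ(ρ) = diag(μ₁, μ₂, μ₃)`,
`det Q = μ₁μ₂μ₃ - (λ₁²μ₁ + λ₂²μ₂ + λ₃²μ₃) / 4`, and `det Q ≥ 0`.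
-/

namespace Matrix

variable {m n 𝕜 : Type*} [Fintype m] [Fintype n] [RCLike 𝕜]

theorem PosSemidef.posSemidef_trace_mul_conjTranspose_mul {ρ : Matrix n n 𝕜}
    (hρ : ρ.PosSemidef) (A : m → Matrix n n 𝕜) :
    (of fun a b => (ρ * ((A a)ᴴ * A b)).trace).PosSemidef := by
  let _ := ρ.toMatrixSeminormedAddCommGroup hρ
  let _ := ρ.toMatrixInnerProductSpace hρ
  convert posSemidef_gram 𝕜 A using 1
  ext a b
  rw [gram_apply, of_apply, ← Matrix.mul_assoc, trace_mul_comm, ← Matrix.mul_assoc]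
  rfl

theorem IsHermitian.star_trace_mul {ρ : Matrix n n 𝕜} (hρ : ρ.IsHermitian) (X : Matrix n n 𝕜) :
    star (ρ * X).trace = (ρ * Xᴴ).trace := by
  rw [← trace_conjTranspose, conjTranspose_mul, hρ.eq, trace_mul_comm]

theorem IsHermitian.trace_mul_eq_ofReal_re {ρ X : Matrix n n 𝕜} (hρ : ρ.IsHermitian)
    (hX : X.IsHermitian) : (ρ * X).trace = (RCLike.re (ρ * X).trace : 𝕜) := by
  rw [eq_comm, ← RCLike.conj_eq_iff_re, ← RCLike.star_def, hρ.star_trace_mul, hX.eq]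

theorem IsHermitian.trace_mul_mul_eq_re_add_trace_lie {ρ X Y : Matrix n n 𝕜}
    (hρ : ρ.IsHermitian) (hX : X.IsHermitian) (hY : Y.IsHermitian) :
    (ρ * (X * Y)).trace = (RCLike.re (ρ * (X * Y)).trace : 𝕜) + (ρ * ⁅X, Y⁆).trace / 2 := by
  have hswap : (ρ * (Y * X)).trace = star (ρ * (X * Y)).trace := by
    rw [hρ.star_trace_mul, conjTranspose_mul, hX.eq, hY.eq]
  rw [Ring.lie_def, mul_sub, trace_sub, hswap, RCLike.re_eq_add_conj, RCLike.star_def]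
  ring

end Matrix

section QuantumCovariance

variable {m n 𝕜 : Type*} [Fintype m] [Fintype n] [RCLike 𝕜]

def quantumCovariance (ρ : Matrix n n 𝕜) (A : m → Matrix n n 𝕜) : Matrix m m 𝕜 :=
  of fun a b => (ρ * (A a * A b)).trace - (ρ * A a).trace * (ρ * A b).trace

theorem posSemidef_quantumCovariance [DecidableEq n] {ρ : Matrix n n 𝕜} (hρ : ρ.PosSemidef)
    (htr : ρ.trace = 1) {A : m → Matrix n n 𝕜} (hA : ∀ a, (A a).IsHermitian) :
    (quantumCovariance ρ A).PosSemidef := by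
  set c := fun a => (ρ * A a).trace
  have hc : ∀ a, star (c a) = c a := fun a => by rw [hρ.1.star_trace_mul, (hA a).eq]
  convert hρ.posSemidef_trace_mul_conjTranspose_mul (fun a => A a - c a • 1) using 1
  ext a b
  simp only [quantumCovariance, of_apply, conjTranspose_sub, conjTranspose_smul,
    conjTranspose_one, hc, (hA a).eq, sub_mul, mul_sub, Matrix.smul_mul, Matrix.mul_smul,
    Matrix.one_mul, Matrix.mul_one, smul_smul, trace_sub, trace_smul, htr, smul_eq_mul, c]
  ring

end QuantumCovariance

theorem Fin.sum_ite_val_eq {M : Type*} [AddCommMonoid M] (n a : ℕ) (f : ℕ → M) :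
    ∑ l : Fin (n + 1), (if (l : ℕ) = a then f l else 0) = if a ≤ n then f a else 0 := by
  rw [Fin.sum_univ_eq_sum_range (fun l => if l = a then f l else 0), Finset.sum_ite_eq']
  simp

section AngularMomentum

variable (j : ℕ)

/-- `⟨m + 1| L₊ |m⟩` for `m = k - s`. -/
def ladderCoeff (k : ℕ) : ℝ :=
  Real.sqrt (sVal j * (sVal j + 1) - ((k : ℝ) - sVal j) * ((k : ℝ) - sVal j + 1))

theorem Lp_apply (i k : Fin (j + 1)) :
    Lp j i k = if (i : ℕ) = k + 1 then (ladderCoeff j k : ℂ) else 0 := rfl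

theorem ladderCoeff_sq {k : ℕ} (hk : k ≤ j) : ladderCoeff j k ^ 2 = (j - k) * (k + 1) := by
  have hk' : (k : ℝ) ≤ j := by exact_mod_cast hk
  rw [ladderCoeff, Real.sq_sqrt] <;> simp only [sVal]
  · ring
  · nlinarith

theorem Lm_eq_conjTranspose : Lm j = (Lp j)ᴴ := by
  ext i k
  simp only [conjTranspose_apply, Lp_apply, Lm, of_apply]
  split_ifs with h
  · simp only [RCLike.star_def, conj_ofReal, ladderCoeff, mVal]
    rw [← h]
    push_cast
    ring_nf
  all_goals first | omega | simp

theorem Lp_mul_Lm :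
    Lp j * Lm j = diagonal fun i : Fin (j + 1) => ((((j : ℝ) - i + 1) * i : ℝ) : ℂ) := by
  ext i k
  rw [Lm_eq_conjTranspose, mul_apply, diagonal_apply]
  split_ifs with hik
  · subst hik
    simp only [conjTranspose_apply, Lp_apply]
    have hterm : ∀ l : Fin (j + 1),
        (if (i : ℕ) = l + 1 then (ladderCoeff j l : ℂ) else 0) *
          star (if (i : ℕ) = l + 1 then (ladderCoeff j l : ℂ) else 0) =
        if (l : ℕ) + 1 = i then ((ladderCoeff j l ^ 2 : ℝ) : ℂ) else 0 := by
      intro l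
      split_ifs <;> first | omega | simp [sq]
    simp only [hterm]
    obtain ⟨i, hi⟩ := i
    cases i with
    | zero => simp
    | succ i =>
      simp only [Nat.add_right_cancel_iff]
      rw [Fin.sum_ite_val_eq j i (fun l => ((ladderCoeff j l ^ 2 : ℝ) : ℂ)),
        if_pos (by omega), ladderCoeff_sq j (by omega)]
      push_cast
      ring
  · refine Finset.sum_eq_zero fun l _ => ?_
    simp only [conjTranspose_apply, Lp_apply]
    have : (i : ℕ) ≠ k := fun h => hik (Fin.ext h)
    split_ifs <;> first | omega | simp

theorem Lm_mul_Lp :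
    Lm j * Lp j = diagonal fun i : Fin (j + 1) => ((((j : ℝ) - i) * (i + 1) : ℝ) : ℂ) := by
  ext i k
  rw [Lm_eq_conjTranspose, mul_apply, diagonal_apply]
  split_ifs with hik
  · subst hik
    simp only [conjTranspose_apply, Lp_apply]
    have hterm : ∀ l : Fin (j + 1),
        star (if (l : ℕ) = i + 1 then (ladderCoeff j i : ℂ) else 0) *
          (if (l : ℕ) = i + 1 then (ladderCoeff j i : ℂ) else 0) =
        if (l : ℕ) = i + 1 then ((ladderCoeff j i ^ 2 : ℝ) : ℂ) else 0 := by
      intro l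
      split_ifs <;> simp [sq]
    simp only [hterm]
    rw [Fin.sum_ite_val_eq j (i + 1) (fun _ => ((ladderCoeff j i ^ 2 : ℝ) : ℂ))]
    split_ifs with hi
    · rw [ladderCoeff_sq j (by omega)]
    · have : (i : ℕ) = j := by omega
      simp [this]
  · refine Finset.sum_eq_zero fun l _ => ?_
    simp only [conjTranspose_apply, Lp_apply]
    have : (i : ℕ) ≠ k := fun h => hik (Fin.ext h)
    split_ifs <;> first | omega | simp

theorem lie_Lp_Lm : ⁅Lp j, Lm j⁆ = (2 : ℂ) • L3 j := by
  rw [Ring.lie_def, Lp_mul_Lm, Lm_mul_Lp, diagonal_sub, L3, ← diagonal_smul]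
  congr 1
  funext i
  simp only [Pi.smul_apply, smul_eq_mul, mVal, sVal]
  push_cast
  ring

theorem isHermitian_L3 : (L3 j).IsHermitian :=
  isHermitian_diagonal_of_self_adjoint _ (funext fun _ => conj_ofReal _)

theorem lie_L3_Lp : ⁅L3 j, Lp j⁆ = Lp j := by
  ext i k
  simp only [Ring.lie_def, Matrix.sub_apply, L3, diagonal_mul, mul_diagonal, Lp_apply]
  split_ifs with h
  · have : ((i : ℕ) : ℝ) = (k : ℕ) + 1 := by exact_mod_cast h
    simp only [mVal, this]
    push_cast
    ring
  · simp

theorem lie_L3_Lm : ⁅L3 j, Lm j⁆ = -Lm j := by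
  have h := congrArg conjTranspose (lie_L3_Lp j)
  rw [Ring.lie_def, conjTranspose_sub, conjTranspose_mul, conjTranspose_mul,
    (isHermitian_L3 j).eq, ← Lm_eq_conjTranspose] at h
  rw [Ring.lie_def, ← neg_sub, h]

theorem isHermitian_L1 : (L1 j).IsHermitian := by
  simp [IsHermitian, L1, Lm_eq_conjTranspose, add_comm]

theorem isHermitian_L2 : (L2 j).IsHermitian := by
  have hc : star (1 / (2 * I)) = -(1 / (2 * I)) := by simp [div_mul_eq_div_div, div_I]
  rw [IsHermitian, L2, Lm_eq_conjTranspose, conjTranspose_smul, conjTranspose_sub,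
    conjTranspose_conjTranspose, hc, neg_smul, ← smul_neg, neg_sub]

theorem lie_L1_L2 : ⁅L1 j, L2 j⁆ = I • L3 j := by
  have h := lie_Lp_Lm j
  rw [Ring.lie_def] at h ⊢
  simp only [L1, L2, div_mul_eq_div_div, div_I, Matrix.smul_mul, Matrix.mul_smul, add_mul,
    mul_add, sub_mul, mul_sub]
  linear_combination (norm := module) (I / 2) • h

theorem lie_L2_L3 : ⁅L2 j, L3 j⁆ = I • L1 j := by
  have hp := lie_L3_Lp j
  have hm := lie_L3_Lm j
  rw [Ring.lie_def] at hp hm ⊢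
  simp only [L1, L2, div_mul_eq_div_div, div_I, Matrix.smul_mul, Matrix.mul_smul, sub_mul,
    mul_sub]
  linear_combination (norm := module) (I / 2) • hp - (I / 2) • hm

theorem lie_L3_L1 : ⁅L3 j, L1 j⁆ = I • L2 j := by
  have hp := lie_L3_Lp j
  have hm := lie_L3_Lm j
  rw [Ring.lie_def] at hp hm ⊢
  have hI : I * -(1 / 2 * I) = 1 / 2 := by
    rw [mul_neg, mul_left_comm, I_mul_I, mul_neg_one, neg_neg]
  simp only [L1, L2, div_mul_eq_div_div, div_I, smul_smul, hI, Matrix.smul_mul, Matrix.mul_smul,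
    mul_add, add_mul]
  linear_combination (norm := module) (1 / 2 : ℂ) • hp + (1 / 2 : ℂ) • hm

theorem isHermitian_Lcomp (a : Fin 3) : (Lcomp j a).IsHermitian := by
  fin_cases a
  exacts [isHermitian_L1 j, isHermitian_L2 j, isHermitian_L3 j]

end AngularMomentum

section Covariance

attribute [local instance] LieRing.ofAssociativeRing

variable {j : ℕ} {ρ : Matrix (Fin (j + 1)) (Fin (j + 1)) ℂ}

theorem ofReal_expVal (hρ : ρ.IsHermitian) {A : Matrix (Fin (j + 1)) (Fin (j + 1)) ℂ}
    (hA : A.IsHermitian) : (expVal ρ A : ℂ) = (ρ * A).trace :=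
  (hρ.trace_mul_eq_ofReal_re hA).symm

theorem quantumCovariance_Lcomp_apply (hρ : ρ.IsHermitian) (a b : Fin 3) :
    quantumCovariance ρ (Lcomp j) a b =
      covMat ρ a b + (ρ * ⁅Lcomp j a, Lcomp j b⁆).trace / 2 := by
  have hA := isHermitian_Lcomp j
  rw [quantumCovariance, of_apply, hρ.trace_mul_mul_eq_re_add_trace_lie (hA a) (hA b),
    ← ofReal_expVal hρ (hA a), ← ofReal_expVal hρ (hA b)]
  simp only [covMat, of_apply, expVal, RCLike.re_to_complex, RCLike.ofReal_eq_complex_ofReal]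
  push_cast
  ring

theorem quantumCovariance_Lcomp_of_isDiag (hρ : ρ.IsHermitian) (hdiag : (covMat ρ).IsDiag) :
    quantumCovariance ρ (Lcomp j) =
      !![(covMat ρ 0 0 : ℂ), I * (expVal ρ (L3 j) / 2 : ℝ), -(I * (expVal ρ (L2 j) / 2 : ℝ));
        -(I * (expVal ρ (L3 j) / 2 : ℝ)), (covMat ρ 1 1 : ℂ), I * (expVal ρ (L1 j) / 2 : ℝ);
        I * (expVal ρ (L2 j) / 2 : ℝ), -(I * (expVal ρ (L1 j) / 2 : ℝ)), (covMat ρ 2 2 : ℂ)] := by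
  have hoff : ∀ a b : Fin 3, a ≠ b → covMat ρ a b = 0 := fun a b h => hdiag h
  ext a b
  rw [quantumCovariance_Lcomp_apply hρ]
  fin_cases a <;> fin_cases b <;>
    simp [hoff, Lcomp, mul_div_assoc, neg_div, lie_L1_L2, lie_L2_L3, lie_L3_L1,
      ← lie_skew (L2 j) (L1 j), ← lie_skew (L3 j) (L2 j), ← lie_skew (L1 j) (L3 j),
      ← ofReal_expVal hρ (isHermitian_L1 j), ← ofReal_expVal hρ (isHermitian_L2 j),
      ← ofReal_expVal hρ (isHermitian_L3 j)]

end Covariance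

theorem det_diag_add_I_cross (μ₁ μ₂ μ₃ x y z : ℝ) :
    !![(μ₁ : ℂ), I * z, -(I * y); -(I * z), μ₂, I * x; I * y, -(I * x), μ₃].det =
      ((μ₁ * μ₂ * μ₃ - (μ₁ * x ^ 2 + μ₂ * y ^ 2 + μ₃ * z ^ 2) : ℝ) : ℂ) := by
  simp only [det_fin_three, of_apply, cons_val', cons_val_zero, cons_val_fin_one, cons_val_one,
    cons_val, mul_neg, sub_neg_eq_add, neg_mul, neg_neg, ofReal_sub, ofReal_mul, ofReal_add,
    ofReal_pow]
  linear_combination (μ₁ * (x : ℂ) ^ 2 + μ₂ * (y : ℂ) ^ 2 + μ₃ * (z : ℂ) ^ 2) * I_sq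

theorem covariance_diagonal_det_bound_general (j : ℕ)
    (ρ : Matrix (Fin (j + 1)) (Fin (j + 1)) ℂ) (hρ : IsDensity ρ)
    (hdiag : ∀ a b : Fin 3, a ≠ b → covMat ρ a b = 0) :
    covMat ρ 0 0 * covMat ρ 1 1 * covMat ρ 2 2 ≥
      (1 / 4) * (expVal ρ (Lcomp j 0) ^ 2 * covMat ρ 0 0 +
        expVal ρ (Lcomp j 1) ^ 2 * covMat ρ 1 1 +
        expVal ρ (Lcomp j 2) ^ 2 * covMat ρ 2 2) := by
  obtain ⟨hρ, htr⟩ := hρ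
  have hpsd := posSemidef_quantumCovariance hρ htr (isHermitian_Lcomp j)
  rw [quantumCovariance_Lcomp_of_isDiag hρ.1 hdiag] at hpsd
  have hdet := hpsd.det_nonneg
  rw [det_diag_add_I_cross, Complex.zero_le_real] at hdet
  simp only [Lcomp, cons_val_zero, cons_val_one, cons_val_two, head_cons, tail_cons]
  linarith

/-- if Λ(ρ) is diagonal with diagonal entries μ₁, μ₂, μ₃, then
    μ₁μ₂μ₃ ≥ (1/4)(λ₁²μ₁ + λ₂²μ₂ + λ₃²μ₃). -/
theorem covariance_diagonal_det_bound (j : ℕ) (hj : 0 < j)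
    (ρ : Matrix (Fin (j + 1)) (Fin (j + 1)) ℂ) (hρ : IsDensity ρ)
    (hdiag : ∀ a b : Fin 3, a ≠ b → covMat ρ a b = 0) :
    covMat ρ 0 0 * covMat ρ 1 1 * covMat ρ 2 2 ≥
      (1 / 4) * (expVal ρ (Lcomp j 0) ^ 2 * covMat ρ 0 0 +
        expVal ρ (Lcomp j 1) ^ 2 * covMat ρ 1 1 +
        expVal ρ (Lcomp j 2) ^ 2 * covMat ρ 2 2) :=
  covariance_diagonal_det_bound_general j ρ hρ hdiag
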